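/- Let M be a Hölder continuous function on Σ_A taking values in the set of d×d matrices with all entries positive. Then there exists a constant c ∈ (0,1] such that for every x ∈ Σ_A and all integers n, ℓ ≥ 1: c · ‖M(x)⋯M(σ^{n−1}x)‖ · ‖M(σⁿx)⋯M(σ^{n+ℓ−1}x)‖ ≤ ‖M(x)⋯M(σ^{n+ℓ−1}x)‖ ≤ ‖M(x)⋯M(σ^{n−1}x)‖ · ‖M(σⁿx)⋯M(σ^{n+ℓ−1}x)‖. -/
import Mathlib


open Filter MeasureTheory
open scoped Classical BigOperators Topology ENNReal

/-- The left shift on `Σ = {1,…,m}^ℕ`, modelled as `ℕ → Fin m`. -/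
def shift {m : ℕ} (x : ℕ → Fin m) : ℕ → Fin m := fun k => x (k + 1)

/-- The subshift of finite type `Σ_A` determined by a 0-1 matrix `A`. -/
def SigmaA {m : ℕ} (A : Matrix (Fin m) (Fin m) ℕ) : Set (ℕ → Fin m) :=
  {x | ∀ k : ℕ, A (x k) (x (k + 1)) = 1}

/-- Admissibility of a word `J ∈ Σ_{A,n}` (a word of length `n` over `{1,…,m}`). -/
def Adm {m : ℕ} (A : Matrix (Fin m) (Fin m) ℕ) {n : ℕ} (J : Fin n → Fin m) : Prop :=
  ∀ (i : ℕ) (h : i + 1 < n), A (J ⟨i, Nat.lt_of_succ_lt h⟩) (J ⟨i + 1, h⟩) = 1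

/-- The (finite) set `Σ_{A,n}` of admissible words of length `n`. -/
noncomputable def admWords {m : ℕ} (A : Matrix (Fin m) (Fin m) ℕ) (n : ℕ) :
    Finset (Fin n → Fin m) :=
  Finset.univ.filter fun J => Adm A J

/-- The cylinder set `[J] ⊆ Σ_A` of a word `J`. -/
def cylinder {m : ℕ} (A : Matrix (Fin m) (Fin m) ℕ) {n : ℕ} (J : Fin n → Fin m) :
    Set (ℕ → Fin m) :=
  {x | x ∈ SigmaA A ∧ ∀ i : Fin n, x (i : ℕ) = J i}

/-- `‖B‖ = 1ᵗ B 1`, the sum of all entries of `B`. -/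
def matNorm {d : ℕ} (B : Matrix (Fin d) (Fin d) ℝ) : ℝ := ∑ i, ∑ j, B i j

/-- The product `M(x) M(σx) ⋯ M(σ^{n-1}x)`. -/
noncomputable def Mprod {m d : ℕ} (M : (ℕ → Fin m) → Matrix (Fin d) (Fin d) ℝ)
    (x : ℕ → Fin m) (n : ℕ) : Matrix (Fin d) (Fin d) ℝ :=
  (((List.range n).map fun i => M (shift^[i] x))).prod

/-- `s_n(J,q) = sup_{x ∈ [J]} ‖M(x)⋯M(σ^{n-1}x)‖^q`. -/
noncomputable def sWord {m d : ℕ} (A : Matrix (Fin m) (Fin m) ℕ)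
    (M : (ℕ → Fin m) → Matrix (Fin d) (Fin d) ℝ) (q : ℝ) {n : ℕ} (J : Fin n → Fin m) : ℝ :=
  sSup ((fun x => matNorm (Mprod M x n) ^ q) '' cylinder A J)

/-- `s_n(q) = Σ_{J ∈ Σ_{A,n}} s_n(J,q)`. -/
noncomputable def sSum {m d : ℕ} (A : Matrix (Fin m) (Fin m) ℕ)
    (M : (ℕ → Fin m) → Matrix (Fin d) (Fin d) ℝ) (q : ℝ) (n : ℕ) : ℝ :=
  ∑ J ∈ admWords A n, sWord A M q J

/-- `M` is Hölder continuous on `Σ_A` with respect to the metric `d(x,y) = m^{-n(x,y)}`: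
entrywise, `|M(x)_{ij} - M(y)_{ij}| ≤ C (m^{-α})^n` whenever `x, y` agree on the first
`n` coordinates. -/
def HolderM {m d : ℕ} (A : Matrix (Fin m) (Fin m) ℕ)
    (M : (ℕ → Fin m) → Matrix (Fin d) (Fin d) ℝ) : Prop :=
  ∃ C > (0:ℝ), ∃ a : ℝ, 0 < a ∧ a < 1 ∧
    ∀ x ∈ SigmaA A, ∀ y ∈ SigmaA A, ∀ n : ℕ, (∀ k < n, x k = y k) →
      ∀ i j, |M x i j - M y i j| ≤ C * a ^ n

/-- `A` is a 0-1 matrix. -/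
def ZeroOne {m : ℕ} (A : Matrix (Fin m) (Fin m) ℕ) : Prop :=
  ∀ i j, A i j = 0 ∨ A i j = 1

/-- `A` is primitive: some power of `A` has all entries positive. -/
def Primitive {m : ℕ} (A : Matrix (Fin m) (Fin m) ℕ) : Prop :=
  ∃ p : ℕ, 1 ≤ p ∧ ∀ i j, 0 < (A ^ p) i j

/-- `M` takes values in the positive `d × d` matrices (on `Σ_A`). -/
def PosM {m d : ℕ} (A : Matrix (Fin m) (Fin m) ℕ)
    (M : (ℕ → Fin m) → Matrix (Fin d) (Fin d) ℝ) : Prop :=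
  ∀ x ∈ SigmaA A, ∀ i j, 0 < M x i j

section Aux
variable {m d : ℕ} {A : Matrix (Fin m) (Fin m) ℕ}
  {M : (ℕ → Fin m) → Matrix (Fin d) (Fin d) ℝ}

lemma shift_mem {x : ℕ → Fin m} (hx : x ∈ SigmaA A) : shift x ∈ SigmaA A :=
  fun k => hx (k + 1)

lemma shift_iter_mem {x : ℕ → Fin m} (hx : x ∈ SigmaA A) (n : ℕ) :
    shift^[n] x ∈ SigmaA A := by
  induction n with
  | zero => exact hx
  | succ n ih => rw [Function.iterate_succ_apply']; exact shift_mem ih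

lemma Mprod_add (M : (ℕ → Fin m) → Matrix (Fin d) (Fin d) ℝ) (x : ℕ → Fin m) (n ℓ : ℕ) :
    Mprod M x (n + ℓ) = Mprod M x n * Mprod M (shift^[n] x) ℓ := by
  unfold Mprod
  rw [List.range_add, List.map_append, List.prod_append, List.map_map]
  have : ((fun i => M (shift^[i] x)) ∘ fun k => n + k)
      = fun i => M (shift^[i] (shift^[n] x)) := by
    funext i
    simp only [Function.comp_apply]
    rw [add_comm, Function.iterate_add_apply]
  rw [this]

lemma Mprod_one (M : (ℕ → Fin m) → Matrix (Fin d) (Fin d) ℝ) (x : ℕ → Fin m) :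
    Mprod M x 1 = M x := by
  show (List.map (fun i => M (shift^[i] x)) (List.range 1)).prod = M x
  rw [List.range_succ, List.range_zero]
  simp

lemma Mprod_nonneg (hpos : PosM A M) {x : ℕ → Fin m} (hx : x ∈ SigmaA A) (n : ℕ) :
    ∀ i j, 0 ≤ Mprod M x n i j := by
  induction n with
  | zero =>
    intro i j
    simp only [Mprod, List.range_zero, List.map_nil, List.prod_nil]
    rw [Matrix.one_apply]
    split <;> norm_num
  | succ n ih =>
    intro i j
    rw [Mprod_add M x n 1, Matrix.mul_apply]
    refine Finset.sum_nonneg fun k _ => mul_nonneg (ih i k) ?_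
    rw [Mprod_one]
    exact (hpos _ (shift_iter_mem hx n) k j).le

lemma matNorm_nonneg {B : Matrix (Fin d) (Fin d) ℝ} (hB : ∀ i j, 0 ≤ B i j) :
    0 ≤ matNorm B :=
  Finset.sum_nonneg fun i _ => Finset.sum_nonneg fun j _ => hB i j

lemma row_sum_le_matNorm {C : Matrix (Fin d) (Fin d) ℝ} (hC : ∀ i j, 0 ≤ C i j) (k : Fin d) :
    (∑ j, C k j) ≤ matNorm C :=
  Finset.single_le_sum (fun i _ => Finset.sum_nonneg fun j _ => hC i j) (Finset.mem_univ k)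

lemma matNorm_mul_expand (B C : Matrix (Fin d) (Fin d) ℝ) :
    matNorm (B * C) = ∑ i, ∑ k, B i k * ∑ j, C k j := by
  unfold matNorm
  refine Finset.sum_congr rfl fun i _ => ?_
  simp only [Matrix.mul_apply]
  rw [Finset.sum_comm]
  exact Finset.sum_congr rfl fun k _ => (Finset.mul_sum _ _ _).symm

lemma matNorm_mul_le {B C : Matrix (Fin d) (Fin d) ℝ}
    (hB : ∀ i j, 0 ≤ B i j) (hC : ∀ i j, 0 ≤ C i j) :
    matNorm (B * C) ≤ matNorm B * matNorm C := by
  rw [matNorm_mul_expand, matNorm, Finset.sum_mul]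
  refine Finset.sum_le_sum fun i _ => ?_
  rw [Finset.sum_mul]
  exact Finset.sum_le_sum fun k _ =>
    mul_le_mul_of_nonneg_left (row_sum_le_matNorm hC k) (hB i k)

lemma matNorm_mul_ge {c0 : ℝ} (hd : 1 ≤ d) {B C : Matrix (Fin d) (Fin d) ℝ}
    (hB : ∀ i j, 0 ≤ B i j) (hCC : ∀ k k' j, c0 * C k' j ≤ C k j) :
    (c0 / d) * (matNorm B * matNorm C) ≤ matNorm (B * C) := by
  have hd0 : (0:ℝ) < d := by exact_mod_cast hd
  have key : ∀ k, (c0 / d) * matNorm C ≤ ∑ j, C k j := by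
    intro k
    have h1 : ∀ j, c0 * (∑ k', C k' j) ≤ d * C k j := by
      intro j
      calc c0 * (∑ k', C k' j) = ∑ k', c0 * C k' j := by rw [Finset.mul_sum]
        _ ≤ ∑ _k' : Fin d, C k j := Finset.sum_le_sum fun k' _ => hCC k k' j
        _ = d * C k j := by simp [mul_comm]
    have h2 : c0 * matNorm C ≤ d * ∑ j, C k j := by
      have : matNorm C = ∑ j, ∑ k', C k' j := by rw [matNorm, Finset.sum_comm]
      rw [this, Finset.mul_sum, Finset.mul_sum]
      exact Finset.sum_le_sum fun j _ => h1 j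
    rw [div_mul_eq_mul_div, div_le_iff₀ hd0]
    linarith [h2]
  rw [matNorm_mul_expand]
  calc (c0 / d) * (matNorm B * matNorm C)
      = ∑ i, ∑ k, B i k * ((c0 / d) * matNorm C) := by
        rw [matNorm, Finset.sum_mul, Finset.mul_sum]
        refine Finset.sum_congr rfl fun i _ => ?_
        rw [Finset.sum_mul, Finset.mul_sum]
        exact Finset.sum_congr rfl fun k _ => by ring
    _ ≤ ∑ i, ∑ k, B i k * ∑ j, C k j :=
        Finset.sum_le_sum fun i _ => Finset.sum_le_sum fun k _ =>
          mul_le_mul_of_nonneg_left (key k) (hB i k)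

lemma continuousOn_entry (hH : HolderM A M) (i j : Fin d) :
    ContinuousOn (fun x => M x i j) (SigmaA A) := by
  obtain ⟨C, hC, a, ha0, ha1, hH⟩ := hH
  intro x hx
  rw [ContinuousWithinAt, Metric.tendsto_nhds]
  intro ε hε
  obtain ⟨n, hn⟩ : ∃ n : ℕ, C * a ^ n < ε := by
    obtain ⟨n, hn⟩ := exists_pow_lt_of_lt_one (div_pos hε hC) ha1
    exact ⟨n, (lt_div_iff₀' hC).mp hn⟩
  have hev : ∀ᶠ y in 𝓝 x, ∀ k ∈ Set.Iio n, y k = x k := by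
    rw [Filter.eventually_all_finite (Set.finite_Iio n)]
    intro k _
    have hcont : Continuous fun y : ℕ → Fin m => y k := continuous_apply k
    exact ((isOpen_discrete ({x k} : Set (Fin m))).preimage hcont).mem_nhds rfl
  filter_upwards [nhdsWithin_le_nhds hev, self_mem_nhdsWithin] with y hy hyA
  rw [Real.dist_eq]
  calc |M y i j - M x i j| ≤ C * a ^ n := hH y hyA x hx n (fun k hk => hy k hk) i j
    _ < ε := hn

end Aux


/-- Lemma 2.1: submultiplicativity and almost supermultiplicativity of
`‖M(x)⋯M(σ^{n-1}x)‖` along orbits. -/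
theorem matnorm_prod_approx_mul
    (m d : ℕ) (hm : 2 ≤ m) (hd : 1 ≤ d)
    (A : Matrix (Fin m) (Fin m) ℕ) (hA01 : ZeroOne A) (hAprim : Primitive A)
    (M : (ℕ → Fin m) → Matrix (Fin d) (Fin d) ℝ)
    (hpos : PosM A M) (hHolder : HolderM A M) :
    ∃ c : ℝ, 0 < c ∧ c ≤ 1 ∧ ∀ x ∈ SigmaA A, ∀ n ℓ : ℕ, 1 ≤ n → 1 ≤ ℓ →
      c * (matNorm (Mprod M x n) * matNorm (Mprod M (shift^[n] x) ℓ))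
          ≤ matNorm (Mprod M x (n + ℓ)) ∧
      matNorm (Mprod M x (n + ℓ))
          ≤ matNorm (Mprod M x n) * matNorm (Mprod M (shift^[n] x) ℓ) := by
  by_cases hne : (SigmaA A).Nonempty
  · -- compactness of Σ_A
    have hclosed : IsClosed (SigmaA A) := by
      have : SigmaA A = ⋂ k : ℕ, {x : ℕ → Fin m | A (x k) (x (k + 1)) = 1} := by
        ext x; simp [SigmaA, Set.mem_iInter]
      rw [this]
      refine isClosed_iInter fun k => ?_
      have hcont : Continuous fun x : ℕ → Fin m => A (x k) (x (k + 1)) := by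
        have h1 : Continuous fun x : ℕ → Fin m => ((x k, x (k + 1)) : Fin m × Fin m) :=
          (continuous_apply k).prodMk (continuous_apply (k + 1))
        exact (continuous_of_discreteTopology
          (f := fun p : Fin m × Fin m => A p.1 p.2)).comp h1
      exact isClosed_eq hcont continuous_const
    have hcomp : IsCompact (SigmaA A) := hclosed.isCompact
    -- uniform lower and upper bounds on entries of M
    have hmin : ∀ p : Fin d × Fin d, ∃ e : ℝ, 0 < e ∧ ∀ y ∈ SigmaA A, e ≤ M y p.1 p.2 := by
      rintro ⟨i, j⟩
      obtain ⟨x₀, hx₀, hx₀min⟩ :=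
        hcomp.exists_isMinOn hne (continuousOn_entry hHolder i j)
      exact ⟨M x₀ i j, hpos x₀ hx₀ i j, fun y hy => hx₀min hy⟩
    have hmax : ∀ p : Fin d × Fin d, ∃ K : ℝ, ∀ y ∈ SigmaA A, M y p.1 p.2 ≤ K := by
      rintro ⟨i, j⟩
      obtain ⟨x₀, hx₀, hx₀max⟩ :=
        hcomp.exists_isMaxOn hne (continuousOn_entry hHolder i j)
      exact ⟨M x₀ i j, fun y hy => hx₀max hy⟩
    choose e he hele using hmin
    choose KK hKK using hmax
    have hdne : (Finset.univ : Finset (Fin d × Fin d)).Nonempty := by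
      have : 0 < d := hd
      exact ⟨(⟨0, this⟩, ⟨0, this⟩), Finset.mem_univ _⟩
    set ε : ℝ := Finset.univ.inf' hdne e with hεdef
    set K : ℝ := Finset.univ.sup' hdne KK with hKdef
    have hε0 : 0 < ε := by
      rw [hεdef, Finset.lt_inf'_iff]
      exact fun p _ => he p
    have hεle : ∀ y ∈ SigmaA A, ∀ i j, ε ≤ M y i j := by
      intro y hy i j
      exact le_trans (Finset.inf'_le e (Finset.mem_univ (i, j))) (hele (i, j) y hy)
    have hKge : ∀ y ∈ SigmaA A, ∀ i j, M y i j ≤ K := by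
      intro y hy i j
      exact le_trans (hKK (i, j) y hy) (Finset.le_sup' KK (Finset.mem_univ (i, j)))
    obtain ⟨x₁, hx₁⟩ := hne
    have hK0 : 0 < K := lt_of_lt_of_le (hpos x₁ hx₁ ⟨0, hd⟩ ⟨0, hd⟩)
      (hKge x₁ hx₁ ⟨0, hd⟩ ⟨0, hd⟩)
    have hd0 : (0:ℝ) < d := by exact_mod_cast hd
    refine ⟨min (ε / K / d) 1, lt_min (by positivity) one_pos, min_le_right _ _,
      fun x hx n ℓ hn hℓ => ?_⟩
    have hBnn := Mprod_nonneg hpos hx n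
    set y := shift^[n] x with hy
    have hyA : y ∈ SigmaA A := shift_iter_mem hx n
    have hCnn := Mprod_nonneg hpos hyA ℓ
    rw [Mprod_add M x n ℓ]
    constructor
    · -- lower bound
      have hCC : ∀ k k' j, (ε / K) * Mprod M y ℓ k' j ≤ Mprod M y ℓ k j := by
        intro k k' j
        obtain ⟨ℓ', rfl⟩ : ∃ ℓ', ℓ = 1 + ℓ' := ⟨ℓ - 1, by omega⟩
        rw [Mprod_add M y 1 ℓ', Mprod_one]
        set R := Mprod M (shift^[1] y) ℓ' with hR
        have hRnn := Mprod_nonneg hpos (shift_iter_mem hyA 1) ℓ'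
        rw [Matrix.mul_apply, Matrix.mul_apply, Finset.mul_sum]
        calc ∑ t, ε / K * (M y k' t * R t j)
            ≤ ∑ t, ε * R t j := by
              refine Finset.sum_le_sum fun t _ => ?_
              have h1 := hKge y hyA k' t
              have h2 := hRnn t j
              rw [div_mul_eq_mul_div, div_le_iff₀ hK0]
              nlinarith [mul_nonneg (mul_nonneg hε0.le h2) (sub_nonneg.mpr h1)]
          _ ≤ ∑ t, M y k t * R t j :=
              Finset.sum_le_sum fun t _ =>
                mul_le_mul_of_nonneg_right (hεle y hyA k t) (hRnn t j)
      have hlow := matNorm_mul_ge hd hBnn hCC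
      refine le_trans ?_ hlow
      apply mul_le_mul_of_nonneg_right (min_le_left _ _)
      exact mul_nonneg (matNorm_nonneg hBnn) (matNorm_nonneg hCnn)
    · exact matNorm_mul_le hBnn hCnn
  · refine ⟨1, one_pos, le_refl 1, fun x hx => absurd ⟨x, hx⟩ hne⟩
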